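/- Index the degree-2 total order modes S = {(0,0),(0,1),(0,2),(1,0),(1,1),(2,0)}. For real parameters q0, q1, q2, let Q be the symmetric S×S matrix whose only nonzero entries are Q_{(0,2),(0,2)} = Q_{(2,0),(2,0)} = q0, Q_{(0,2),(2,0)} = Q_{(2,0),(0,2)} = q2, and Q_{(1,1),(1,1)} = q1. Let D_x be the S×S matrix acting on mode basis vectors by D_x e_{(1,0)} = e_{(0,0)}, D_x e_{(1,1)} = e_{(0,1)}, D_x e_{(2,0)} = 3·e_{(1,0)}, and D_x e_{(v,w)} = 0 for the remaining modes; let D_y act analogously with the two indices exchanged (D_y e_{(0,1)} = e_{(0,0)}, D_y e_{(1,1)} = e_{(1,0)}, D_y e_{(0,2)} = 3·e_{(0,1)}, else 0). Let T be the S×S matrix with T e_{(v,w)} = (−1)^w · e_{(w,v)}. Then for all real q0, q1, q2: (i) Q is symmetric; (ii) Q·D_x = 0 and Q·D_y = 0 (in particular both are antisymmetric); and (iii) T·Q = Q·T. -/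
import Mathlib


open Matrix

/-- The index set of the degree-2 total order basis: modes `(v,w)` with `v + w ≤ 2`. -/
def TO2 : Type := {p : Fin 3 × Fin 3 // (p.1 : ℕ) + (p.2 : ℕ) ≤ 2}

instance : Fintype TO2 := Subtype.fintype _
instance : DecidableEq TO2 := Subtype.instDecidableEq

/-- The symmetric filter matrix `Q(q0, q1, q2)` for the degree-2 total order basis. -/
def filterTO2 (q0 q1 q2 : ℝ) : Matrix TO2 TO2 ℝ :=
  fun i j =>
    if (i.val = (0, 2) ∧ j.val = (0, 2)) ∨ (i.val = (2, 0) ∧ j.val = (2, 0)) then q0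
    else if (i.val = (0, 2) ∧ j.val = (2, 0)) ∨ (i.val = (2, 0) ∧ j.val = (0, 2)) then q2
    else if i.val = (1, 1) ∧ j.val = (1, 1) then q1
    else 0

/-- Modal differentiation matrix in `x` for the degree-2 total order basis:
`Dₓ e_{(1,0)} = e_{(0,0)}`, `Dₓ e_{(1,1)} = e_{(0,1)}`, `Dₓ e_{(2,0)} = 3 e_{(1,0)}`,
and zero on the remaining modes. -/
def DxTO2 : Matrix TO2 TO2 ℝ :=
  fun i j =>
    if j.val = (1, 0) ∧ i.val = (0, 0) then 1
    else if j.val = (1, 1) ∧ i.val = (0, 1) then 1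
    else if j.val = (2, 0) ∧ i.val = (1, 0) then 3
    else 0

/-- Modal differentiation matrix in `y` for the degree-2 total order basis:
`D_y e_{(0,1)} = e_{(0,0)}`, `D_y e_{(1,1)} = e_{(1,0)}`, `D_y e_{(0,2)} = 3 e_{(0,1)}`,
and zero on the remaining modes. -/
def DyTO2 : Matrix TO2 TO2 ℝ :=
  fun i j =>
    if j.val = (0, 1) ∧ i.val = (0, 0) then 1
    else if j.val = (1, 1) ∧ i.val = (1, 0) then 1
    else if j.val = (0, 2) ∧ i.val = (0, 1) then 3
    else 0

/-- Modal matrix of the quarter-turn rotation pullback: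
`T e_{(v,w)} = (−1)^w e_{(w,v)}`. -/
def TTO2 : Matrix TO2 TO2 ℝ :=
  fun i j => if i.val = (j.val.2, j.val.1) then (-1 : ℝ) ^ (j.val.2 : ℕ) else 0

lemma TO2.sum_eq (f : TO2 → ℝ) : ∑ x : TO2, f x =
    f ⟨(0,0), by decide⟩ + (f ⟨(0,1), by decide⟩ + (f ⟨(0,2), by decide⟩ +
    (f ⟨(1,0), by decide⟩ + (f ⟨(1,1), by decide⟩ + (f ⟨(2,0), by decide⟩ + 0))))) := by
  rfl

set_option maxHeartbeats 2000000 in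
/-- For all real `q0, q1, q2`: `Q` is symmetric, `Q Dₓ = 0` and `Q D_y = 0` (in
particular both are antisymmetric), and `Q` commutes with the quarter-turn rotation
matrix `T`. -/
theorem stmt_13 (q0 q1 q2 : ℝ) :
    (filterTO2 q0 q1 q2)ᵀ = filterTO2 q0 q1 q2 ∧
    filterTO2 q0 q1 q2 * DxTO2 = 0 ∧
    filterTO2 q0 q1 q2 * DyTO2 = 0 ∧
    TTO2 * filterTO2 q0 q1 q2 = filterTO2 q0 q1 q2 * TTO2 := by
  refine ⟨?_, ?_, ?_, ?_⟩
  · ext i j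
    simp only [Matrix.transpose_apply, filterTO2]
    split_ifs <;> tauto
  · ext i j
    rw [Matrix.mul_apply, TO2.sum_eq]
    simp +decide [filterTO2, DxTO2]
  · ext i j
    rw [Matrix.mul_apply, TO2.sum_eq]
    simp +decide [filterTO2, DyTO2]
  · ext i j
    rw [Matrix.mul_apply, Matrix.mul_apply, TO2.sum_eq, TO2.sum_eq]
    fin_cases i <;> fin_cases j <;> simp +decide [filterTO2, TTO2]
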